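/- arXiv:2308.13583 — 4 statements merged into one kernel-verified Lean document; each statement's English description precedes it below -/
import Mathlib

section
/- For positive integers n and N and any complex number a, the terminating hypergeometric sum identity holds: (-N+1)_{n+N} · ∑_{k=0}^{n+N} [(-n-N)_k (a)_k / ((-N+1)_k k!)] x^k = (N+1)_n · (-N+1)_N · (∑_{k=0}^{N} [(-N)_k (a)_k / ((-N+1)_k k!)] x^k) · (∑_{k=0}^{n} [(-n)_k (a+N)_k / ((N+1)_k k!)] x^k), where (q)_k denotes the Pochhammer symbol and in each sum the index k is restricted so that (-N+1)_k ≠ 0 issues are handled by interpreting the ratio (-n-N)_k(a)_k/(-N+1)_k as the polynomial coefficient obtained after multiplying through by (-N+1)_{n+N} (i.e., all terms are well-defined after the stated multiplication). -/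
open Polynomial Finset

/-- Pochhammer (shifted factorial) symbol `(a)_k = a(a+1)⋯(a+k-1)`. -/
noncomputable def poch (a : ℂ) (k : ℕ) : ℂ := (ascPochhammer ℂ k).eval a

/-!
For `k < N ≤ M` the factor `(-N+1+k)_{M-k}` passes through `0`, so both termwise-scaled series
begin at `x^N`. The middle one then reduces to `(-1)^N (a)_N x^N`, and after the shift `k = N + j`
the coefficients of the left side split as `(a)_{N+j} = (a)_N (a+N)_j` times a ratio of
Pochhammer symbols at integers, which becomes an identity between factorials.
-/

open Nat

lemma poch_add (a : ℂ) (m k : ℕ) : poch a (m + k) = poch a m * poch (a + m) k := by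
  simpa [poch] using (congrArg (eval a) (ascPochhammer_mul (S := ℂ) m k)).symm

lemma poch_neg_natCast_of_lt {m k : ℕ} (h : m < k) : poch (-(m : ℂ)) k = 0 :=
  ascPochhammer_eval_neg_coe_nat_of_lt h

lemma poch_natCast_add_one (m k : ℕ) : poch ((m : ℂ) + 1) k = (m + k)! / m ! := by
  refine eq_div_of_mul_eq (by exact_mod_cast m.factorial_ne_zero) ?_
  rw [poch, ← Nat.cast_add_one, ← Nat.cast_ascFactorial, mul_comm]
  exact_mod_cast Nat.factorial_mul_ascFactorial m k

lemma poch_neg_natCast {m k : ℕ} (h : k ≤ m) :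
    poch (-(m : ℂ)) k = (-1) ^ k * m ! / (m - k)! := by
  rw [poch, ascPochhammer_eval_neg_eq_descPochhammer, mul_div_assoc]
  refine congrArg _ (eq_div_of_mul_eq (by exact_mod_cast (m - k).factorial_ne_zero) ?_)
  rw [descPochhammer_eval_eq_descFactorial, mul_comm]
  exact_mod_cast Nat.factorial_mul_descFactorial h

lemma poch_neg_add_one_add_eq_zero {N M k : ℕ} (hk : k < N) (hM : N ≤ M) :
    poch (-(N : ℂ) + 1 + k) (M - k) = 0 := by
  have : -(N : ℂ) + 1 + k = -((N - 1 - k : ℕ) : ℂ) := by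
    push_cast [Nat.cast_sub (by omega : k ≤ N - 1), Nat.cast_sub (by omega : 1 ≤ N)]
    ring
  rw [this]
  exact poch_neg_natCast_of_lt (by omega)

lemma Finset.sum_range_succ_eq_sum_range_of_eq_zero {M : Type*} [AddCommMonoid M] {f : ℕ → M}
    {m n : ℕ} (hmn : m ≤ n) (hf : ∀ k < m, f k = 0) :
    ∑ k ∈ range (n + 1), f k = ∑ j ∈ range (n - m + 1), f (m + j) := by
  rw [← sum_range_add_sum_Ico _ (by omega : m ≤ n + 1),
    sum_eq_zero fun k hk => hf k (mem_range.1 hk), zero_add, sum_Ico_eq_sum_range,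
    Nat.sub_add_comm hmn]

/-- `(-N+1)_M · ₂F₁(b, a; -N+1; x)` for `b` with `(b)_{M+1} = 0`, the factor `(-N+1)_M` being
absorbed termwise as `(-N+1)_M / (-N+1)_k = (-N+1+k)_{M-k}`. -/
noncomputable def pochMulHyp2F1 (b a : ℂ) (N M : ℕ) (x : ℂ) : ℂ :=
  ∑ k ∈ range (M + 1), poch b k * poch a k * poch (-(N : ℂ) + 1 + k) (M - k) / k ! * x ^ k

lemma pochMulHyp2F1_eq_sum_range_sub (b a : ℂ) {N M : ℕ} (h : N ≤ M) (x : ℂ) :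
    pochMulHyp2F1 b a N M x = ∑ j ∈ range (M - N + 1),
      poch b (N + j) * poch a (N + j) * poch ((j : ℂ) + 1) (M - N - j) / (N + j)! *
        x ^ (N + j) := by
  rw [pochMulHyp2F1, sum_range_succ_eq_sum_range_of_eq_zero h fun k hk => by
    rw [poch_neg_add_one_add_eq_zero hk h, mul_zero, zero_div, zero_mul]]
  refine sum_congr rfl fun j _ => ?_
  rw [show -(N : ℂ) + 1 + ((N + j : ℕ) : ℂ) = j + 1 by push_cast; ring, Nat.sub_add_eq]

lemma pochMulHyp2F1_neg_self (a : ℂ) (N : ℕ) (x : ℂ) :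
    pochMulHyp2F1 (-(N : ℂ)) a N N x = (-1) ^ N * poch a N * x ^ N := by
  rw [pochMulHyp2F1_eq_sum_range_sub _ _ le_rfl, Nat.sub_self, zero_add, sum_range_one,
    add_zero, poch_neg_natCast le_rfl, Nat.sub_self]
  have : (N ! : ℂ) ≠ 0 := by exact_mod_cast N.factorial_ne_zero
  field_simp
  simp [poch]

lemma poch_neg_sub_mul_poch_div_factorial {n N j : ℕ} (hj : j ≤ n) :
    poch (-(n : ℂ) - N) (N + j) * poch ((j : ℂ) + 1) (n - j) / (N + j)! =
      (-1) ^ N * poch ((N : ℂ) + 1) n * (poch (-(n : ℂ)) j / (poch ((N : ℂ) + 1) j * j !)) := by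
  rw [show -(n : ℂ) - N = -((n + N : ℕ) : ℂ) by push_cast; ring, poch_neg_natCast (by omega),
    poch_natCast_add_one, poch_natCast_add_one, poch_natCast_add_one, poch_neg_natCast hj,
    show n + N - (N + j) = n - j by omega, show j + (n - j) = n by omega, add_comm N n]
  have : (N ! : ℂ) ≠ 0 := by exact_mod_cast N.factorial_ne_zero
  field_simp
  ring

theorem bigF_factorization_general (n N : ℕ) (a x : ℂ) :
    ∑ k ∈ Finset.range (n + N + 1),
      poch (-(n : ℂ) - N) k * poch a k * poch (-(N : ℂ) + 1 + k) (n + N - k)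
        / (k.factorial : ℂ) * x ^ k
    = poch ((N : ℂ) + 1) n
      * (∑ k ∈ Finset.range (N + 1),
          poch (-(N : ℂ)) k * poch a k * poch (-(N : ℂ) + 1 + k) (N - k)
            / (k.factorial : ℂ) * x ^ k)
      * (∑ k ∈ Finset.range (n + 1),
          poch (-(n : ℂ)) k * poch (a + N) k
            / (poch ((N : ℂ) + 1) k * (k.factorial : ℂ)) * x ^ k) := by
  change pochMulHyp2F1 (-(n : ℂ) - N) a N (n + N) x =
    poch ((N : ℂ) + 1) n * pochMulHyp2F1 (-(N : ℂ)) a N N x * _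
  rw [pochMulHyp2F1_eq_sum_range_sub _ _ (by omega), pochMulHyp2F1_neg_self, Nat.add_sub_cancel,
    mul_sum]
  refine sum_congr rfl fun j hj => ?_
  have hcoeff := poch_neg_sub_mul_poch_div_factorial (N := N) (Nat.lt_succ_iff.1 (mem_range.1 hj))
  rw [poch_add a, pow_add]
  linear_combination poch a N * poch (a + N) j * x ^ N * x ^ j * hcoeff

/-- Lemma 3.1 (Factorization): the termwise-regularized identity
`(-N+1)_{n+N} ₂F₁(-n-N, a; -N+1; x)
  = (N+1)_n (-N+1)_N ₂F₁(-N, a; -N+1; x) ₂F₁(-n, a+N; N+1; x)`,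
where each expression `(-N+1)_M ₂F₁(-M', a; -N+1; x)` is interpreted termwise via
the well-defined coefficients `(-M')_k (a)_k (-N+1+k)_{M-k} / k!`. -/
theorem bigF_factorization (n N : ℕ) (hn : 1 ≤ n) (hN : 1 ≤ N) (a x : ℂ) :
    ∑ k ∈ Finset.range (n + N + 1),
      poch (-(n : ℂ) - N) k * poch a k * poch (-(N : ℂ) + 1 + k) (n + N - k)
        / (k.factorial : ℂ) * x ^ k
    = poch ((N : ℂ) + 1) n
      * (∑ k ∈ Finset.range (N + 1),
          poch (-(N : ℂ)) k * poch a k * poch (-(N : ℂ) + 1 + k) (N - k)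
            / (k.factorial : ℂ) * x ^ k)
      * (∑ k ∈ Finset.range (n + 1),
          poch (-(n : ℂ)) k * poch (a + N) k
            / (poch ((N : ℂ) + 1) k * (k.factorial : ℂ)) * x ^ k) :=
  bigF_factorization_general n N a x
end

section
/- Let N be a positive integer, α, c ∈ ℂ with c ≠ ±1, and suppose all denominators below are nonzero. With b_n and u_n the recurrence coefficients of the big -1 Jacobi polynomials, one has for all n ≥ 0: b_{n+2N+1}(α, -2N-1, c) = b_n(α, 2N+1, -c), and for all n ≥ 1: u_{n+2N+1}(α, -2N-1, c) = u_n(α, 2N+1, -c). -/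
open Polynomial Finset

/-- Diagonal recurrence coefficient `b_n(α,β,c)` of the monic big `-1` Jacobi polynomials. -/
noncomputable def bcoef (α β c : ℂ) (n : ℕ) : ℂ :=
  if Even n then
    -c + (c - 1) * n / (α + β + 2 * n) + (c + 1) * (β + n + 1) / (α + β + 2 * n + 2)
  else
    c - (c - 1) * (n + 1) / (α + β + 2 * n + 2) - (c + 1) * (β + n) / (α + β + 2 * n)

/-- Subdiagonal recurrence coefficient `u_n(α,β,c)` of the monic big `-1` Jacobi polynomials. -/
noncomputable def ucoef (α β c : ℂ) (n : ℕ) : ℂ :=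
  if Even n then (c - 1) ^ 2 * n * (α + β + n) / (α + β + 2 * n) ^ 2
  else (c + 1) ^ 2 * (α + n) * (β + n) / (α + β + 2 * n) ^ 2

/-- Monic big `-1` Jacobi polynomials: `Q₀ = 1`, `Q_{n+1} = (X - b_n) Q_n - u_n Q_{n-1}`. -/
noncomputable def bigQ (α β c : ℂ) : ℕ → Polynomial ℂ
  | 0 => 1
  | 1 => X - C (bcoef α β c 0)
  | (n + 2) => (X - C (bcoef α β c (n + 1))) * bigQ α β c (n + 1)
      - C (ucoef α β c (n + 1)) * bigQ α β c n

section ParityBranches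

variable {α β c : ℂ} {n : ℕ}

theorem bcoef_of_even (h : Even n) : bcoef α β c n =
    -c + (c - 1) * n / (α + β + 2 * n) + (c + 1) * (β + n + 1) / (α + β + 2 * n + 2) :=
  if_pos h

theorem bcoef_of_odd (h : Odd n) : bcoef α β c n =
    c - (c - 1) * (n + 1) / (α + β + 2 * n + 2) - (c + 1) * (β + n) / (α + β + 2 * n) :=
  if_neg (Nat.not_even_iff_odd.mpr h)

theorem ucoef_of_even (h : Even n) :
    ucoef α β c n = (c - 1) ^ 2 * n * (α + β + n) / (α + β + 2 * n) ^ 2 :=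
  if_pos h

theorem ucoef_of_odd (h : Odd n) :
    ucoef α β c n = (c + 1) ^ 2 * (α + n) * (β + n) / (α + β + 2 * n) ^ 2 :=
  if_neg (Nat.not_even_iff_odd.mpr h)

end ParityBranches

/- Shifting the index by an odd `k` flips its parity, and with `β = -k` the denominators
`α + β + 2(n + k)` become `α + k + 2n`, so each parity branch at `(α, -k, c)` agrees term by term
with the opposite branch at `(α, k, -c)`. -/
theorem bcoef_neg_add_of_odd {k : ℕ} (hk : Odd k) (α c : ℂ) (n : ℕ) :
    bcoef α (-k) c (n + k) = bcoef α k (-c) n := by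
  rcases Nat.even_or_odd n with hn | hn
  · rw [bcoef_of_odd (hn.add_odd hk), bcoef_of_even hn]
    push_cast
    ring
  · rw [bcoef_of_even (hn.add_odd hk), bcoef_of_odd hn]
    push_cast
    ring

theorem ucoef_neg_add_of_odd {k : ℕ} (hk : Odd k) (α c : ℂ) (n : ℕ) :
    ucoef α (-k) c (n + k) = ucoef α k (-c) n := by
  rcases Nat.even_or_odd n with hn | hn
  · rw [ucoef_of_odd (hn.add_odd hk), ucoef_of_even hn]
    push_cast
    ring
  · rw [ucoef_of_even (hn.add_odd hk), ucoef_of_odd hn]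
    push_cast
    ring

theorem coef_shift_beta_general (N : ℕ) (α c : ℂ) :
    (∀ n : ℕ, bcoef α (-2 * (N : ℂ) - 1) c (n + 2 * N + 1)
      = bcoef α (2 * (N : ℂ) + 1) (-c) n) ∧
    (∀ n : ℕ, 1 ≤ n → ucoef α (-2 * (N : ℂ) - 1) c (n + 2 * N + 1)
      = ucoef α (2 * (N : ℂ) + 1) (-c) n) := by
  have hk : Odd (2 * N + 1) := odd_two_mul_add_one N
  have hβ : -2 * (N : ℂ) - 1 = -((2 * N + 1 : ℕ) : ℂ) := by push_cast; ring
  have hβ' : 2 * (N : ℂ) + 1 = ((2 * N + 1 : ℕ) : ℂ) := by push_cast; ring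
  refine ⟨fun n => ?_, fun n _ => ?_⟩
  · rw [hβ, hβ', add_assoc]
    exact bcoef_neg_add_of_odd hk α c n
  · rw [hβ, hβ', add_assoc]
    exact ucoef_neg_add_of_odd hk α c n

/-- Shift identities for the recurrence coefficients when `β = -2N-1`:
`b_{n+2N+1}(α, -2N-1, c) = b_n(α, 2N+1, -c)` for `n ≥ 0` and
`u_{n+2N+1}(α, -2N-1, c) = u_n(α, 2N+1, -c)` for `n ≥ 1`. -/
theorem coef_shift_beta (N : ℕ) (hN : 1 ≤ N) (α c : ℂ)
    (hc1 : c ≠ 1) (hc2 : c ≠ -1)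
    (hden : ∀ m : ℕ, α + (2 * (N : ℂ) + 1) + 2 * m ≠ 0) :
    (∀ n : ℕ, bcoef α (-2 * (N : ℂ) - 1) c (n + 2 * N + 1)
      = bcoef α (2 * (N : ℂ) + 1) (-c) n) ∧
    (∀ n : ℕ, 1 ≤ n → ucoef α (-2 * (N : ℂ) - 1) c (n + 2 * N + 1)
      = ucoef α (2 * (N : ℂ) + 1) (-c) n) :=
  coef_shift_beta_general N α c
end

section
/- Let (Q_n) be a sequence of monic polynomials satisfying Q_{-1} = 0, Q_0 = 1, and x Q_n = Q_{n+1} + b_n Q_n + u_n Q_{n-1} with complex coefficients b_n, u_n, and suppose u_k ≠ 0 for 1 ≤ k ≤ M. Then there exists a (unique, normalized by L(1) = 1) linear functional L on polynomials such that L(Q_n Q_m) = 0 for all n ≠ m with n, m ≤ M, and L(Q_n²) = u_1 u_2 ··· u_n ≠ 0 for n ≤ M. -/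
/-!
The recurrence makes `Qₙ` monic of degree `n`, so the `Qₙ` form a basis of `ℂ[X]`; let `L` be the
coordinate along `Q₀`. Multiplying the recurrence by `Xᵏ` gives
`L(Xᵏ⁺¹ Qⱼ₊₁) = L(Xᵏ Qⱼ₊₂) + bⱼ₊₁ L(Xᵏ Qⱼ₊₁) + uⱼ₊₁ L(Xᵏ Qⱼ)`, and induction on `k` yields
`L(Xᵏ Qₙ) = 0` for `k < n` and `L(Xⁿ Qₙ) = u₁ ⋯ uₙ`. Expanding `Qₘ` in powers of `X` then gives
orthogonality and the norms.
-/

open Polynomial Finset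

namespace Polynomial

variable {R : Type*} [CommRing R]

theorem exists_linearMap_apply_eq_of_isMonicOfDegree [IsDomain R] {Q : ℕ → R[X]}
    (hQ : ∀ n, IsMonicOfDegree (Q n) n) (v : ℕ → R) : ∃ L : R[X] →ₗ[R] R, ∀ n, L (Q n) = v n := by
  let S : Sequence R := ⟨Q, fun n => by rw [degree_eq_natDegree (hQ n).ne_zero, (hQ n).natDegree_eq]⟩
  let B := S.basis fun n => by simp [S, (hQ n).leadingCoeff_eq]
  exact ⟨B.constr R v, fun n => by simpa [B, S] using B.constr_basis R v n⟩

def ThreeTermRecurrence (Q : ℕ → R[X]) (b u : ℕ → R) : Prop :=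
  ∀ n, X * Q (n + 1) = Q (n + 2) + C (b (n + 1)) * Q (n + 1) + C (u (n + 1)) * Q n

namespace ThreeTermRecurrence

variable {Q : ℕ → R[X]} {b u : ℕ → R}

theorem isMonicOfDegree [Nontrivial R] (hrec : ThreeTermRecurrence Q b u) (hQ0 : Q 0 = 1)
    (hQ1 : Q 1 = X - C (b 0)) (n : ℕ) : IsMonicOfDegree (Q n) n := by
  induction n using Nat.twoStepInduction with
  | zero => simp [hQ0]
  | one => simpa [hQ1] using isMonicOfDegree_X_sub_one (b 0)
  | more n hn hn1 =>
    have hlower : (C (b (n + 1)) * Q (n + 1) + C (u (n + 1)) * Q n).natDegree < n + 2 := by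
      refine (natDegree_add_le _ _).trans_lt (max_lt ?_ ?_)
      · exact (natDegree_C_mul_le _ _).trans_lt (by rw [hn1.natDegree_eq]; omega)
      · exact (natDegree_C_mul_le _ _).trans_lt (by rw [hn.natDegree_eq]; omega)
    have hXQ : IsMonicOfDegree (X * Q (n + 1)) (n + 2) := by
      simpa [add_comm, add_left_comm] using (isMonicOfDegree_X R).mul hn1
    simpa [hrec n] using hXQ.sub hlower

theorem apply_X_pow_succ_mul (hrec : ThreeTermRecurrence Q b u) (L : R[X] →ₗ[R] R) (k j : ℕ) :
    L (X ^ (k + 1) * Q (j + 1)) =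
      L (X ^ k * Q (j + 2)) + b (j + 1) * L (X ^ k * Q (j + 1)) + u (j + 1) * L (X ^ k * Q j) := by
  rw [pow_succ, mul_assoc, hrec j, mul_add, mul_add, mul_left_comm _ (C _),
    mul_left_comm _ (C _), ← smul_eq_C_mul, ← smul_eq_C_mul, map_add, map_add, map_smul,
    map_smul, smul_eq_mul, smul_eq_mul]

theorem apply_X_pow_mul_eq_zero (hrec : ThreeTermRecurrence Q b u) {L : R[X] →ₗ[R] R}
    (hL : ∀ n, n ≠ 0 → L (Q n) = 0) {k n : ℕ} (hkn : k < n) : L (X ^ k * Q n) = 0 := by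
  induction k generalizing n with
  | zero => simpa using hL n (by omega)
  | succ k ih =>
    obtain ⟨j, rfl⟩ : ∃ j, n = j + 1 := ⟨n - 1, by omega⟩
    rw [apply_X_pow_succ_mul hrec, ih (by omega), ih (by omega), ih (by omega)]
    ring

theorem apply_mul_eq_zero_of_degree_lt (hrec : ThreeTermRecurrence Q b u) {L : R[X] →ₗ[R] R}
    (hL : ∀ n, n ≠ 0 → L (Q n) = 0) {p : R[X]} {n : ℕ} (hp : p.degree < n) :
    L (p * Q n) = 0 := by
  classical
  suffices degreeLT R n ≤ LinearMap.ker (L ∘ₗ LinearMap.mulRight R (Q n)) from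
    this (mem_degreeLT.2 hp)
  rw [degreeLT_eq_span_X_pow, Submodule.span_le, Finset.coe_image, Set.image_subset_iff]
  intro k hk
  exact apply_X_pow_mul_eq_zero hrec hL (mem_range.1 hk)

theorem apply_X_pow_mul_self (hrec : ThreeTermRecurrence Q b u) {L : R[X] →ₗ[R] R}
    (hL : ∀ n, n ≠ 0 → L (Q n) = 0) (hL0 : L (Q 0) = 1) (n : ℕ) :
    L (X ^ n * Q n) = ∏ k ∈ Icc 1 n, u k := by
  induction n with
  | zero => simpa using hL0
  | succ n ih =>
    rw [apply_X_pow_succ_mul hrec, apply_X_pow_mul_eq_zero hrec hL (by omega),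
      apply_X_pow_mul_eq_zero hrec hL (by omega), ih, prod_Icc_succ_top (by omega)]
    ring

theorem apply_mul_eq_zero_of_lt (hrec : ThreeTermRecurrence Q b u) {L : R[X] →ₗ[R] R}
    (hL : ∀ n, n ≠ 0 → L (Q n) = 0) {m n : ℕ} (hQm : IsMonicOfDegree (Q m) m) (hmn : m < n) :
    L (Q m * Q n) = 0 :=
  apply_mul_eq_zero_of_degree_lt hrec hL <|
    degree_le_natDegree.trans_lt (by rw [hQm.natDegree_eq]; exact_mod_cast hmn)

theorem apply_mul_self (hrec : ThreeTermRecurrence Q b u) {L : R[X] →ₗ[R] R}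
    (hL : ∀ n, n ≠ 0 → L (Q n) = 0) (hL0 : L (Q 0) = 1) {n : ℕ} (hQn : IsMonicOfDegree (Q n) n) :
    L (Q n * Q n) = ∏ k ∈ Icc 1 n, u k := by
  have hlower : (Q n - X ^ n).degree < (n : WithBot ℕ) := by
    rcases eq_or_ne n 0 with rfl | hn
    · simp [isMonicOfDegree_zero_iff.1 hQn]
    · exact degree_le_natDegree.trans_lt (by exact_mod_cast hQn.natDegree_sub_X_pow hn)
  calc L (Q n * Q n) = L (X ^ n * Q n) + L ((Q n - X ^ n) * Q n) := by
        rw [← map_add, ← add_mul, add_sub_cancel]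
    _ = ∏ k ∈ Icc 1 n, u k := by
        rw [apply_X_pow_mul_self hrec hL hL0, apply_mul_eq_zero_of_degree_lt hrec hL hlower,
          add_zero]

end ThreeTermRecurrence

end Polynomial

theorem truncated_favard_general (b u : ℕ → ℂ) (M : ℕ)
    (Q : ℕ → Polynomial ℂ)
    (hQ0 : Q 0 = 1)
    (hQ1 : Q 1 = X - C (b 0))
    (hrec : ∀ n : ℕ,
      X * Q (n + 1) = Q (n + 2) + C (b (n + 1)) * Q (n + 1) + C (u (n + 1)) * Q n)
    (hu : ∀ k, 1 ≤ k → k ≤ M → u k ≠ 0) :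
    ∃ L : Polynomial ℂ →ₗ[ℂ] ℂ, L 1 = 1 ∧
      (∀ n m : ℕ, n ≤ M → m ≤ M → n ≠ m → L (Q n * Q m) = 0) ∧
      (∀ n : ℕ, n ≤ M →
        L (Q n * Q n) = ∏ k ∈ Finset.Icc 1 n, u k ∧ L (Q n * Q n) ≠ 0) := by
  have hrec : ThreeTermRecurrence Q b u := hrec
  have hQ := hrec.isMonicOfDegree hQ0 hQ1
  obtain ⟨L, hLQ⟩ := exists_linearMap_apply_eq_of_isMonicOfDegree hQ fun n => if n = 0 then 1 else 0
  have hL : ∀ n, n ≠ 0 → L (Q n) = 0 := fun n hn => by simp [hLQ, hn]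
  have hL0 : L (Q 0) = 1 := by simp [hLQ]
  refine ⟨L, hQ0 ▸ hL0, fun n m _ _ hnm => ?_, fun n hn => ?_⟩
  · rcases hnm.lt_or_gt with h | h
    · exact hrec.apply_mul_eq_zero_of_lt hL (hQ n) h
    · rw [mul_comm]
      exact hrec.apply_mul_eq_zero_of_lt hL (hQ m) h
  · rw [hrec.apply_mul_self hL hL0 (hQ n)]
    exact ⟨rfl, prod_ne_zero_iff.2 fun k hk => hu k (mem_Icc.1 hk).1 ((mem_Icc.1 hk).2.trans hn)⟩

/-- Truncated Favard theorem: if `(Q_n)` are monic polynomials with `Q₀ = 1`,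
`Q₁ = X - b₀`, satisfying the three-term recurrence
`X Q_{n+1} = Q_{n+2} + b_{n+1} Q_{n+1} + u_{n+1} Q_n`, and `u_k ≠ 0` for `1 ≤ k ≤ M`,
then there is a linear functional `L` with `L 1 = 1`, orthogonalizing the `Q_n` with
`n, m ≤ M`, with `L(Q_n²) = u₁ ⋯ u_n ≠ 0` for `n ≤ M`. -/
theorem truncated_favard (b u : ℕ → ℂ) (M : ℕ)
    (Q : ℕ → Polynomial ℂ)
    (hmonic : ∀ n, (Q n).Monic)
    (hQ0 : Q 0 = 1)
    (hQ1 : Q 1 = X - C (b 0))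
    (hrec : ∀ n : ℕ,
      X * Q (n + 1) = Q (n + 2) + C (b (n + 1)) * Q (n + 1) + C (u (n + 1)) * Q n)
    (hu : ∀ k, 1 ≤ k → k ≤ M → u k ≠ 0) :
    ∃ L : Polynomial ℂ →ₗ[ℂ] ℂ, L 1 = 1 ∧
      (∀ n m : ℕ, n ≤ M → m ≤ M → n ≠ m → L (Q n * Q m) = 0) ∧
      (∀ n : ℕ, n ≤ M →
        L (Q n * Q n) = ∏ k ∈ Finset.Icc 1 n, u k ∧ L (Q n * Q n) ≠ 0) :=
  truncated_favard_general b u M Q hQ0 hQ1 hrec hu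
end

section
/- For every even n = 2M ≥ 0, with α, β, c ∈ ℂ such that all expressions are defined, the polynomial Q_n(x) := κ_n [ ₂F₁(-M, M+(α+β+2)/2; (α+1)/2; (1-x²)/(1-c²)) + (n(1-x)/((c+1)(α+1))) ₂F₁(1-M, M+(α+β+2)/2; (α+3)/2; (1-x²)/(1-c²)) ], with κ_n = (1-c²)^M ((α+1)/2)_M / ((n+α+β+2)/2)_M, is a monic polynomial of degree n in x. -/
/-!
Substituting `z = (1 - x²)/(1 - c²)` into a polynomial of degree `≤ K` in `z` gives one of degree
`≤ 2K` in `x`, whose `x^{2K}` coefficient is the `z^K` coefficient times `(-1/(1 - c²))^K`.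
Since `(-M)_M = (-1)^M M!`, the first `₂F₁` thus contributes `(b)_M / (((α+1)/2)_M (1 - c²)^M)`,
with `b = M + (α+β+2)/2`, to `x^{2M}`, and `κ_n` normalises this to `1`. The second term has
degree `≤ 1 + 2(M - 1) < 2M`, and vanishes for `M = 0` through its factor `2M`.
-/

open Polynomial Finset

/-- Terminating Gauss hypergeometric polynomial
`₂F₁(a, b; c; z) = ∑_{k=0}^{K} (a)_k (b)_k / ((c)_k k!) z^k`. -/
noncomputable def F21 (a b c : ℂ) (K : ℕ) (z : ℂ) : ℂ :=
  ∑ k ∈ Finset.range (K + 1), poch a k * poch b k / (poch c k * (k.factorial : ℂ)) * z ^ k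

namespace Polynomial

variable {R : Type*} [CommRing R]

theorem natDegree_comp_le_of_le {p q : R[X]} {m n : ℕ} (hp : p.natDegree ≤ m)
    (hq : q.natDegree ≤ n) : (p.comp q).natDegree ≤ m * n :=
  natDegree_comp_le.trans (Nat.mul_le_mul hp hq)

theorem coeff_comp_mul_of_natDegree_le {p q : R[X]} {m n : ℕ} (hp : p.natDegree ≤ m)
    (hq : q.natDegree ≤ n) (hn : n ≠ 0) :
    (p.comp q).coeff (m * n) = p.coeff m * q.coeff n ^ m := by
  rw [comp_eq_sum_left, sum_over_range' _ (by simp) (m + 1) (Nat.lt_succ_of_le hp),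
    finsetSum_coeff, sum_range_succ, coeff_C_mul, coeff_pow_of_natDegree_le hq,
    sum_eq_zero, zero_add]
  intro i hi
  refine coeff_eq_zero_of_natDegree_lt ((natDegree_C_mul_le _ _).trans_lt ?_)
  calc (q ^ i).natDegree ≤ i * n := natDegree_pow_le_of_le i hq
    _ < m * n := Nat.mul_lt_mul_of_pos_right (mem_range.mp hi) (Nat.pos_of_ne_zero hn)

theorem natDegree_C_mul_one_sub_X_sq_le (u : R) : (C u * (1 - X ^ 2)).natDegree ≤ 2 := by
  compute_degree

theorem coeff_C_mul_one_sub_X_sq_two (u : R) : (C u * (1 - X ^ 2)).coeff 2 = -u := by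
  simp [coeff_one]

theorem monic_add_of_coeff_eq_one_of_degree_lt [Nontrivial R] {p q : R[X]} {n : ℕ}
    (hp : p.natDegree ≤ n) (hpn : p.coeff n = 1) (hq : q.degree < n) :
    (p + q).Monic ∧ (p + q).natDegree = n := by
  have hdeg : (p + q).natDegree ≤ n :=
    (natDegree_add_le _ _).trans (max_le hp (natDegree_le_iff_degree_le.mpr hq.le))
  have hcoeff : (p + q).coeff n = 1 := by rw [coeff_add, hpn, coeff_eq_zero_of_degree_lt hq, add_zero]
  exact ⟨monic_of_natDegree_le_of_coeff_eq_one n hdeg hcoeff,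
    natDegree_eq_of_le_of_coeff_ne_zero hdeg (hcoeff ▸ one_ne_zero)⟩

end Polynomial

theorem poch_neg_nat_self (n : ℕ) : poch (-(n : ℂ)) n = (-1) ^ n * n.factorial := by
  rw [poch, ascPochhammer_eval_neg_eq_descPochhammer, descPochhammer_eval_eq_descFactorial,
    Nat.descFactorial_self]

theorem poch_ne_zero {a : ℂ} {n : ℕ} (h : ∀ k < n, a + k ≠ 0) : poch a n ≠ 0 := by
  simp only [poch, ne_eq, ascPochhammer_eval_eq_zero_iff, not_exists, not_and]
  exact fun k hk hka => h k hk (by rw [hka]; ring)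

noncomputable def F21Poly (a b c : ℂ) (K : ℕ) : ℂ[X] :=
  ∑ k ∈ range (K + 1), C (poch a k * poch b k / (poch c k * (k.factorial : ℂ))) * X ^ k

theorem eval_F21Poly (a b c : ℂ) (K : ℕ) (z : ℂ) : (F21Poly a b c K).eval z = F21 a b c K z := by
  simp [F21Poly, F21, eval_finsetSum]

theorem natDegree_F21Poly_le (a b c : ℂ) (K : ℕ) : (F21Poly a b c K).natDegree ≤ K :=
  natDegree_sum_le_of_forall_le _ _ fun k hk =>
    (natDegree_C_mul_X_pow_le _ k).trans (Nat.lt_succ_iff.mp (mem_range.mp hk))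

theorem coeff_F21Poly_self (a b c : ℂ) (K : ℕ) :
    (F21Poly a b c K).coeff K = poch a K * poch b K / (poch c K * (K.factorial : ℂ)) := by
  simp [F21Poly, finsetSum_coeff]

theorem coeff_F21Poly_neg_nat_self (b c : ℂ) (n : ℕ) :
    (F21Poly (-(n : ℂ)) b c n).coeff n = (-1) ^ n * poch b n / poch c n := by
  rw [coeff_F21Poly_self, poch_neg_nat_self]
  field_simp [Nat.cast_ne_zero.mpr n.factorial_ne_zero]

theorem coeff_F21Poly_neg_nat_comp_C_mul_one_sub_X_sq (b c w : ℂ) (n : ℕ) :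
    ((F21Poly (-(n : ℂ)) b c n).comp (C w⁻¹ * (1 - X ^ 2))).coeff (2 * n) =
      poch b n / (poch c n * w ^ n) := by
  rw [mul_comm 2 n, coeff_comp_mul_of_natDegree_le (natDegree_F21Poly_le ..)
    (natDegree_C_mul_one_sub_X_sq_le _) two_ne_zero, coeff_F21Poly_neg_nat_self,
    coeff_C_mul_one_sub_X_sq_two, neg_pow w⁻¹]
  calc _ = ((-1 : ℂ) ^ n) ^ 2 * (poch b n / (poch c n * w ^ n)) := by ring
    _ = _ := by rw [← pow_mul, pow_mul', neg_one_sq, one_pow, one_mul]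

/-- The even-degree hypergeometric representation of the big `-1` Jacobi polynomial
`Q_{2M}^{(0)}(x; α, β, c)` defines a monic polynomial of degree `n = 2M` in `x`. -/
theorem bigQ_even_hypergeometric_monic (M : ℕ) (α β c : ℂ)
    (hc1 : c ≠ 1) (hc2 : c ≠ -1)
    (hα : ∀ k : ℕ, α + 1 + 2 * k ≠ 0)
    (hκ : poch ((2 * (M : ℂ) + α + β + 2) / 2) M ≠ 0) :
    ∃ P : Polynomial ℂ, P.Monic ∧ P.natDegree = 2 * M ∧ ∀ x : ℂ,
      P.eval x =
        (1 - c ^ 2) ^ M * poch ((α + 1) / 2) M / poch ((2 * (M : ℂ) + α + β + 2) / 2) M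
        * (F21 (-(M : ℂ)) ((M : ℂ) + (α + β + 2) / 2) ((α + 1) / 2) M
              ((1 - x ^ 2) / (1 - c ^ 2))
          + 2 * (M : ℂ) * (1 - x) / ((c + 1) * (α + 1))
              * F21 (1 - (M : ℂ)) ((M : ℂ) + (α + β + 2) / 2) ((α + 3) / 2) (M - 1)
                ((1 - x ^ 2) / (1 - c ^ 2))) := by
  have hc : (1 : ℂ) - c ^ 2 ≠ 0 := by
    rw [show (1 : ℂ) - c ^ 2 = (1 - c) * (1 + c) by ring]
    exact mul_ne_zero (sub_ne_zero.mpr hc1.symm) fun h => hc2 (by linear_combination h)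
  have hγ : poch ((α + 1) / 2) M ≠ 0 :=
    poch_ne_zero fun k _ h => hα k (by linear_combination 2 * h)
  set b : ℂ := (M : ℂ) + (α + β + 2) / 2
  rw [show (2 * (M : ℂ) + α + β + 2) / 2 = b by ring] at hκ ⊢
  set κ := (1 - c ^ 2) ^ M * poch ((α + 1) / 2) M / poch b M
  set Z : ℂ[X] := C (1 - c ^ 2)⁻¹ * (1 - X ^ 2)
  set P₁ := C κ * (F21Poly (-(M : ℂ)) b ((α + 1) / 2) M).comp Z
  set P₂ := C κ * (C (2 * (M : ℂ) / ((c + 1) * (α + 1))) * (1 - X) *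
    (F21Poly (1 - (M : ℂ)) b ((α + 3) / 2) (M - 1)).comp Z)
  have hP₁ : P₁.natDegree ≤ 2 * M := (natDegree_C_mul_le _ _).trans <| by
    rw [mul_comm]; exact natDegree_comp_le_of_le (natDegree_F21Poly_le ..)
      (natDegree_C_mul_one_sub_X_sq_le _)
  have hP₁coeff : P₁.coeff (2 * M) = 1 := by
    rw [coeff_C_mul, coeff_F21Poly_neg_nat_comp_C_mul_one_sub_X_sq]
    simp only [κ]
    field_simp
  have hP₂ : P₂.degree < (2 * M : ℕ) := by
    rcases M.eq_zero_or_pos with hM | hM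
    · simp [P₂, hM]
    refine degree_le_natDegree.trans_lt (WithBot.coe_lt_coe.mpr ?_)
    calc P₂.natDegree ≤ 1 + (M - 1) * 2 := (natDegree_C_mul_le _ _).trans <|
          natDegree_mul_le.trans <| add_le_add (by compute_degree) <|
            natDegree_comp_le_of_le (natDegree_F21Poly_le ..) (natDegree_C_mul_one_sub_X_sq_le _)
      _ < 2 * M := by omega
  obtain ⟨hmonic, hdeg⟩ := monic_add_of_coeff_eq_one_of_degree_lt hP₁ hP₁coeff hP₂
  refine ⟨P₁ + P₂, hmonic, hdeg, fun x => ?_⟩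
  simp only [P₁, P₂, Z, eval_mul, eval_add, eval_C, eval_sub, eval_one, eval_X, eval_comp,
    eval_pow, eval_F21Poly, inv_mul_eq_div]
  ring
end
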